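/- There is a contravariant functor Ψ from the category R (whose objects are points b = (b_i^ρ) satisfying b_j^{ρρ_i} b_i^ρ = b_i^{ρρ_j} b_j^ρ, and whose morphisms h: b → b' are collections of scalars h_ρ ∈ k with b_i^ρ h_ρ = h_{ρρ_i} b'^ρ_i) to the category C of cyclic A-modules A/M with dim_k(A/M)_ρ = 1 for all ρ and e_ρ ∉ M, taking b to A/M_b, and Ψ is an isomorphism of categories. -/

import Mathlib

open MvPolynomial

section

variable {k : Type*} [Field k] {G : Type*} [CommGroup G] {n : ℕ}
variable [DecidableEq (G →* kˣ)]

/-- The free `S`-module `A = ⊕_{ρ ∈ G*} S e_ρ`, with `G* = Hom(G, kˣ)`. -/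
abbrev Acar (k : Type*) [Field k] (G : Type*) [CommGroup G] (n : ℕ) :=
  (G →* kˣ) →₀ MvPolynomial (Fin n) k

/-- The `G*`-degree of a monomial exponent vector. -/
def degMon (χ : Fin n → G →* kˣ) (u : Fin n →₀ ℕ) : G →* kˣ :=
  u.prod fun i e => χ i ^ e

/-- The homogeneous component of degree `τ` of a polynomial. -/
noncomputable def homComp (χ : Fin n → G →* kˣ) (τ : G →* kˣ)
    (p : MvPolynomial (Fin n) k) : MvPolynomial (Fin n) k :=
  ∑ u ∈ p.support.filter (fun u => degMon χ u = τ), monomial u (coeff u p)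

/-- Left multiplication by the idempotent `e_σ ∈ A` on `A`. -/
noncomputable def eMul (χ : Fin n → G →* kˣ) (σ : G →* kˣ) (m : Acar k G n) :
    Acar k G n :=
  ∑ ρ ∈ m.support, Finsupp.single ρ (homComp χ (σ * ρ⁻¹) (m ρ))

/-- A left `A`-ideal: an `S`-submodule stable under all `e_σ`. -/
def IsLeftIdeal (χ : Fin n → G →* kˣ)
    (N : Submodule (MvPolynomial (Fin n) k) (Acar k G n)) : Prop :=
  ∀ (σ : G →* kˣ), ∀ m ∈ N, eMul χ σ m ∈ N

/-- The degree-`ρ` homogeneous component of `A`. -/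
noncomputable def homPiece (k : Type*) [Field k] (χ : Fin n → G →* kˣ) (ρ : G →* kˣ) :
    Submodule k (Acar k G n) :=
  Submodule.span k {f | ∃ (u : Fin n →₀ ℕ) (σ : G →* kˣ),
    degMon χ u * σ = ρ ∧ f = Finsupp.single σ (monomial u 1)}

/-- Objects of the category `𝓡`: McKay quiver representations
`b = (b_i^ρ)` of dimension vector `(1,…,1)` satisfying the relations
`b_j^{ρρ_i} b_i^ρ = b_i^{ρρ_j} b_j^ρ`. -/
def ObjR (k : Type*) [Field k] (G : Type*) [CommGroup G] (n : ℕ)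
    (χ : Fin n → G →* kˣ) : Type _ :=
  {b : Fin n → (G →* kˣ) → k //
    ∀ (i j : Fin n) (ρ : G →* kˣ), b j (ρ * χ i) * b i ρ = b i (ρ * χ j) * b j ρ}

/-- Morphisms `h : b ⟶ b'` in `𝓡`: scalars `h_ρ` with `b_i^ρ h_ρ = h_{ρρ_i} b'^ρ_i`. -/
def HomR (χ : Fin n → G →* kˣ) (b b' : ObjR k G n χ) : Type _ :=
  {h : (G →* kˣ) → k //
    ∀ (i : Fin n) (ρ : G →* kˣ), b.1 i ρ * h ρ = h (ρ * χ i) * b'.1 i ρ}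

/-- The generator `x_i e_ρ − b_i^ρ e_{ρρ_i}` of `M_b`. -/
noncomputable def gen (χ : Fin n → G →* kˣ) (b : Fin n → (G →* kˣ) → k)
    (i : Fin n) (ρ : G →* kˣ) : Acar k G n :=
  Finsupp.single ρ (X i) - Finsupp.single (ρ * χ i) (C (b i ρ))

/-- The submodule `M_b ⊆ A`. -/
noncomputable def Mb (χ : Fin n → G →* kˣ) (b : Fin n → (G →* kˣ) → k) :
    Submodule (MvPolynomial (Fin n) k) (Acar k G n) :=
  Submodule.span _ (Set.range fun p : Fin n × (G →* kˣ) => gen χ b p.1 p.2)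

/-- Objects of the category `𝓒`: left `A`-ideals `M` such that the cyclic
module `A/M` has `G*`-graded Hilbert function one and `e_ρ ∉ M` for all `ρ`. -/
def IsObjC (χ : Fin n → G →* kˣ)
    (M : Submodule (MvPolynomial (Fin n) k) (Acar k G n)) : Prop :=
  IsLeftIdeal χ M ∧
  (∀ ρ : G →* kˣ, Finsupp.single ρ (1 : MvPolynomial (Fin n) k) ∉ M) ∧
  (∀ ρ : G →* kˣ,
    Module.finrank k ((homPiece k χ ρ).map (M.mkQ.restrictScalars k)) = 1)

/-- Morphisms `A/M ⟶ A/M'` in `𝓒`: `A`-module homomorphisms, i.e. `S`-linear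
maps `A → A/M'` killing `M` and commuting with all the idempotents `e_σ`. -/
def HomC (χ : Fin n → G →* kˣ)
    (M M' : Submodule (MvPolynomial (Fin n) k) (Acar k G n)) : Type _ :=
  {f : Acar k G n →ₗ[MvPolynomial (Fin n) k] (Acar k G n ⧸ M') //
    (∀ m ∈ M, f m = 0) ∧
    ∀ (σ : G →* kˣ) (m m' : Acar k G n),
      Submodule.Quotient.mk m' = f m →
        Submodule.Quotient.mk (eMul χ σ m') = f (eMul χ σ m)}

end

/-! For `b ∈ 𝓡` the arrows `x_i : δ_ρ ↦ b_i^ρ δ_{ρρ_i}` on `k G* = ⊕_ρ k δ_ρ` commute, so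
`k G*` is an `A`-module, and `e_ρ ↦ δ_ρ` induces `A/M_b ≅ k G*`: modulo `M_b` every element of
`A` is a `k`-combination of the `e_ρ`, and `M_b` is the kernel. Since the arrows are homogeneous,
the idempotent `e_σ` acts on `A/M_b` as the projection onto `k e_σ`; this gives the graded pieces
of `A/M_b` and shows that `M_b` is a left ideal.

Conversely, if `A/M` has one-dimensional graded pieces not killing `e_ρ`, then
`x_i e_ρ ≡ b_i^ρ e_{ρρ_i}` modulo `M` for unique scalars `b_i^ρ`; comparing `x_i x_j e_ρ` with
`x_j x_i e_ρ` gives the relations, and projecting with the `e_σ` gives `M = M_b`.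

An `A`-linear map `A/M_{b'} → A/M_b` commutes with `e_ρ`, so it sends `e_ρ` to some `h_ρ e_ρ`;
that it kills the generators of `M_{b'}` is exactly the morphism condition on `h`. -/

section Grading

variable {k : Type*} [Field k] {G : Type*} [CommGroup G] {n : ℕ} (χ : Fin n → G →* kˣ)

lemma degMon_add (u v : Fin n →₀ ℕ) : degMon χ (u + v) = degMon χ u * degMon χ v :=
  Finsupp.prod_add_index' (fun i => pow_zero (χ i)) (fun i => pow_add (χ i))

lemma degMon_single (i : Fin n) (e : ℕ) : degMon χ (Finsupp.single i e) = χ i ^ e :=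
  Finsupp.prod_single_index (pow_zero (χ i))

lemma weight_ofMul_eq_ofMul_degMon (u : Fin n →₀ ℕ) :
    Finsupp.weight (fun i => Additive.ofMul (χ i)) u = Additive.ofMul (degMon χ u) := by
  simp only [Finsupp.weight_apply, degMon, Finsupp.prod, Finsupp.sum, ofMul_prod]
  rfl

variable [DecidableEq (G →* kˣ)]

lemma homComp_eq_weightedHomogeneousComponent (τ : G →* kˣ) (p : MvPolynomial (Fin n) k) :
    homComp χ τ p =
      weightedHomogeneousComponent (fun i => Additive.ofMul (χ i)) (Additive.ofMul τ) p := by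
  simp only [weightedHomogeneousComponent_apply, homComp, weight_ofMul_eq_ofMul_degMon,
    EmbeddingLike.apply_eq_iff_eq]

lemma homComp_add (τ : G →* kˣ) (p q : MvPolynomial (Fin n) k) :
    homComp χ τ (p + q) = homComp χ τ p + homComp χ τ q := by
  simp only [homComp_eq_weightedHomogeneousComponent, map_add]

lemma homComp_C_mul (τ : G →* kˣ) (c : k) (p : MvPolynomial (Fin n) k) :
    homComp χ τ (C c * p) = C c * homComp χ τ p := by
  simp only [homComp_eq_weightedHomogeneousComponent, weightedHomogeneousComponent_C_mul]

lemma homComp_monomial (τ : G →* kˣ) (u : Fin n →₀ ℕ) (c : k) :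
    homComp χ τ (monomial u c) = if degMon χ u = τ then monomial u c else 0 := by
  rw [homComp_eq_weightedHomogeneousComponent, weightedHomogeneousComponent_of_mem
    (isWeightedHomogeneous_monomial _ u c (weight_ofMul_eq_ofMul_degMon χ u))]
  simp only [EmbeddingLike.apply_eq_iff_eq, eq_comm]

lemma homComp_zero (τ : G →* kˣ) : homComp χ τ (0 : MvPolynomial (Fin n) k) = 0 := by
  simp only [homComp_eq_weightedHomogeneousComponent, map_zero]

lemma eMul_apply (σ : G →* kˣ) (m : Acar k G n) (ρ : G →* kˣ) :
    eMul χ σ m ρ = homComp χ (σ * ρ⁻¹) (m ρ) := by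
  by_cases hρ : ρ ∈ m.support
  · simp [eMul, Finsupp.finsetSum_apply, Finsupp.single_apply, hρ]
  · simp_all [eMul, Finsupp.finsetSum_apply, Finsupp.single_apply, homComp_zero]

lemma eMul_zero (σ : G →* kˣ) : eMul χ σ (0 : Acar k G n) = 0 := by
  simp [eMul]

lemma eMul_add (σ : G →* kˣ) (m m' : Acar k G n) :
    eMul χ σ (m + m') = eMul χ σ m + eMul χ σ m' := by
  ext ρ : 1
  simp only [eMul_apply, Finsupp.add_apply, homComp_add]

lemma eMul_single_monomial (σ ρ : G →* kˣ) (u : Fin n →₀ ℕ) (c : k) :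
    eMul χ σ (Finsupp.single ρ (monomial u c)) =
      if degMon χ u * ρ = σ then Finsupp.single ρ (monomial u c) else 0 := by
  ext ρ' : 1
  rw [eMul_apply]
  rcases eq_or_ne ρ ρ' with rfl | hne
  · simp only [Finsupp.single_eq_same, homComp_monomial, eq_mul_inv_iff_mul_eq (a := degMon χ u)]
    split_ifs <;> simp
  · rw [Finsupp.single_eq_of_ne hne.symm, homComp_zero]
    split_ifs <;> simp [Finsupp.single_eq_of_ne hne.symm]

end Grading

section Representation

variable {k : Type*} [Field k] {G : Type*} [CommGroup G] {n : ℕ} (χ : Fin n → G →* kˣ)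

/-- The arrow `x_i` of the representation `b` acting on `k G* = ⊕_ρ k δ_ρ`. -/
noncomputable def repX (b : Fin n → (G →* kˣ) → k) (i : Fin n) :
    Module.End k ((G →* kˣ) →₀ k) :=
  Finsupp.lsum k fun ρ => b i ρ • Finsupp.lsingle (ρ * χ i)

lemma repX_single (b : Fin n → (G →* kˣ) → k) (i : Fin n) (ρ : G →* kˣ) (c : k) :
    repX χ b i (Finsupp.single ρ c) = Finsupp.single (ρ * χ i) (b i ρ * c) := by
  simp [repX, Finsupp.smul_single]

lemma repX_commute (b : ObjR k G n χ) (i j : Fin n) :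
    Commute (repX χ b.1 i) (repX χ b.1 j) := by
  refine Finsupp.lhom_ext fun ρ c => ?_
  simp only [Module.End.mul_apply, repX_single, ← mul_assoc, b.2 i j ρ,
    mul_right_comm ρ (χ j) (χ i)]

open scoped IsMulCommutative in
/-- The `S`-module structure on `k G*` given by a point `b` of `𝓡`: the relations on `b` are
exactly what makes the arrows commute. -/
noncomputable def rep (b : ObjR k G n χ) :
    MvPolynomial (Fin n) k →ₐ[k] Module.End k ((G →* kˣ) →₀ k) :=
  haveI := Algebra.isMulCommutative_adjoin k (s := Set.range (repX χ b.1)) (by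
    rintro _ ⟨i, rfl⟩ _ ⟨j, rfl⟩
    exact repX_commute χ b i j)
  (Algebra.adjoin k (Set.range (repX χ b.1))).val.comp
    (aeval fun i => ⟨repX χ b.1 i, Algebra.subset_adjoin ⟨i, rfl⟩⟩)

lemma rep_X (b : ObjR k G n χ) (i : Fin n) : rep χ b (X i) = repX χ b.1 i := by
  simp [rep]

lemma rep_C_apply (b : ObjR k G n χ) (c : k) (v : (G →* kˣ) →₀ k) :
    rep χ b (C c) v = c • v := by
  rw [← MvPolynomial.algebraMap_eq, AlgHom.commutes, Module.algebraMap_end_apply]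

lemma repX_pow_single (b : Fin n → (G →* kˣ) → k) (i : Fin n) (e : ℕ) (ρ : G →* kˣ)
    (c : k) :
    ∃ c' : k, (repX χ b i ^ e) (Finsupp.single ρ c) = Finsupp.single (χ i ^ e * ρ) c' := by
  induction e generalizing ρ c with
  | zero => exact ⟨c, by rw [pow_zero, pow_zero (χ i), one_mul ρ, Module.End.one_apply]⟩
  | succ e ih =>
    obtain ⟨c', hc'⟩ := ih (ρ * χ i) (b i ρ * c)
    refine ⟨c', ?_⟩
    rw [pow_succ, Module.End.mul_apply, repX_single, hc', pow_succ (χ i), mul_assoc (χ i ^ e),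
      mul_comm (χ i) ρ]

lemma rep_monomial_single (b : ObjR k G n χ) (u : Fin n →₀ ℕ) (c : k) (ρ : G →* kˣ)
    (a : k) :
    ∃ c' : k, rep χ b (monomial u c) (Finsupp.single ρ a) =
      Finsupp.single (degMon χ u * ρ) c' := by
  induction u using Finsupp.induction generalizing ρ a with
  | zero =>
    refine ⟨c * a, ?_⟩
    rw [monomial_zero', rep_C_apply, Finsupp.smul_single, smul_eq_mul]
    exact congrArg (Finsupp.single · (c * a)) (one_mul ρ).symm
  | single_add i e v _ _ ih =>
    obtain ⟨c', hc'⟩ := ih ρ a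
    obtain ⟨c'', hc''⟩ := repX_pow_single χ b.1 i e (degMon χ v * ρ) c'
    refine ⟨c'', ?_⟩
    rw [← one_mul c, ← monomial_mul, ← X_pow_eq_monomial, map_mul, map_pow, rep_X,
      Module.End.mul_apply, hc', hc'', degMon_add, degMon_single, mul_assoc (χ i ^ e)]

/-- The map `A → k G*`, `p e_ρ ↦ p · δ_ρ`, for the `S`-module structure `rep χ b`. -/
noncomputable def toRep (b : ObjR k G n χ) : Acar k G n →ₗ[k] (G →* kˣ) →₀ k :=
  Finsupp.lsum k fun ρ => (LinearMap.applyₗ (Finsupp.single ρ 1)).comp (rep χ b).toLinearMap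

lemma toRep_single (b : ObjR k G n χ) (ρ : G →* kˣ) (p : MvPolynomial (Fin n) k) :
    toRep χ b (Finsupp.single ρ p) = rep χ b p (Finsupp.single ρ 1) := by
  simp [toRep]

lemma toRep_single_C (b : ObjR k G n χ) (ρ : G →* kˣ) (c : k) :
    toRep χ b (Finsupp.single ρ (C c)) = Finsupp.single ρ c := by
  rw [toRep_single, rep_C_apply, Finsupp.smul_single_one]

lemma toRep_smul (b : ObjR k G n χ) (p : MvPolynomial (Fin n) k) (m : Acar k G n) :
    toRep χ b (p • m) = rep χ b p (toRep χ b m) := by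
  induction m using Finsupp.induction_linear with
  | zero => simp
  | add f g hf hg => rw [smul_add, map_add, hf, hg, map_add, map_add]
  | single ρ q => rw [Finsupp.smul_single, smul_eq_mul, toRep_single, toRep_single, map_mul,
      Module.End.mul_apply]

lemma toRep_gen (b : ObjR k G n χ) (b' : Fin n → (G →* kˣ) → k) (i : Fin n)
    (ρ : G →* kˣ) :
    toRep χ b (gen χ b' i ρ) = Finsupp.single (ρ * χ i) (b.1 i ρ - b' i ρ) := by
  rw [gen, map_sub, toRep_single, toRep_single_C, rep_X, repX_single, mul_one,
    Finsupp.single_sub]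

end Representation

section Quotient

variable {k : Type*} [Field k] {G : Type*} [CommGroup G] {n : ℕ} (χ : Fin n → G →* kˣ)

noncomputable def ofRep : ((G →* kˣ) →₀ k) →ₗ[k] Acar k G n :=
  Finsupp.mapRange.linearMap (Algebra.linearMap k (MvPolynomial (Fin n) k))

lemma ofRep_single (ρ : G →* kˣ) (c : k) :
    (ofRep (Finsupp.single ρ c) : Acar k G n) = Finsupp.single ρ (C c) := by
  simp [ofRep, MvPolynomial.algebraMap_eq]

lemma gen_mem_Mb (b : Fin n → (G →* kˣ) → k) (i : Fin n) (ρ : G →* kˣ) :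
    gen χ b i ρ ∈ Mb χ b :=
  Submodule.subset_span ⟨(i, ρ), rfl⟩

lemma single_C_eq_smul (ρ : G →* kˣ) (c : k) :
    (Finsupp.single ρ (C c) : Acar k G n) = c • Finsupp.single ρ 1 := by
  rw [C_eq_smul_one, Finsupp.smul_single]

lemma eq_zero_of_single_C_mem {M : Submodule (MvPolynomial (Fin n) k) (Acar k G n)}
    {ρ : G →* kˣ} (hM : Finsupp.single ρ 1 ∉ M) {c : k} (h : Finsupp.single ρ (C c) ∈ M) :
    c = 0 := by
  by_contra hc
  refine hM ?_
  simpa [single_C_eq_smul, smul_smul, hc] using M.smul_of_tower_mem c⁻¹ h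

lemma eq_of_mk_single_C_eq {M : Submodule (MvPolynomial (Fin n) k) (Acar k G n)}
    {ρ : G →* kˣ} (hM : Finsupp.single ρ 1 ∉ M) {c d : k}
    (h : (Submodule.Quotient.mk (Finsupp.single ρ (C c)) : Acar k G n ⧸ M) =
      Submodule.Quotient.mk (Finsupp.single ρ (C d))) : c = d := by
  rw [Submodule.Quotient.eq, ← Finsupp.single_sub, ← map_sub] at h
  exact sub_eq_zero.1 (eq_zero_of_single_C_mem hM h)

lemma X_smul_mk_single_C {M : Submodule (MvPolynomial (Fin n) k) (Acar k G n)}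
    {b : Fin n → (G →* kˣ) → k} {i : Fin n} {ρ : G →* kˣ} (hgen : gen χ b i ρ ∈ M)
    (c : k) :
    (X i : MvPolynomial (Fin n) k) •
        (Submodule.Quotient.mk (Finsupp.single ρ (C c)) : Acar k G n ⧸ M) =
      Submodule.Quotient.mk (Finsupp.single (ρ * χ i) (C (b i ρ * c))) := by
  rw [← Submodule.Quotient.mk_smul, Submodule.Quotient.eq]
  convert M.smul_mem (C c) hgen using 1
  simp only [gen, smul_sub, Finsupp.smul_single, smul_eq_mul, map_mul, mul_comm]

lemma mk_ofRep_repX (b : Fin n → (G →* kˣ) → k) (i : Fin n) (v : (G →* kˣ) →₀ k) :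
    (Submodule.Quotient.mk (ofRep (repX χ b i v)) : Acar k G n ⧸ Mb χ b) =
      (X i : MvPolynomial (Fin n) k) • Submodule.Quotient.mk (ofRep v) := by
  induction v using Finsupp.induction_linear with
  | zero => simp
  | add v w hv hw => simp only [map_add, Submodule.Quotient.mk_add, hv, hw, smul_add]
  | single ρ c =>
    rw [repX_single, ofRep_single, ofRep_single, X_smul_mk_single_C χ (gen_mem_Mb χ b i ρ)]

lemma mk_ofRep_toRep (b : ObjR k G n χ) (m : Acar k G n) :
    (Submodule.Quotient.mk (ofRep (toRep χ b m)) : Acar k G n ⧸ Mb χ b.1) =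
      Submodule.Quotient.mk m := by
  induction m using Finsupp.induction_linear with
  | zero => simp
  | add f g hf hg => simp only [map_add, Submodule.Quotient.mk_add, hf, hg]
  | single ρ p =>
    induction p using MvPolynomial.induction_on with
    | C c => rw [toRep_single_C, ofRep_single]
    | add p q hp hq => simp only [Finsupp.single_add, map_add, Submodule.Quotient.mk_add, hp, hq]
    | mul_X p i hp =>
      rw [mul_comm, ← smul_eq_mul, ← Finsupp.smul_single, toRep_smul, rep_X, mk_ofRep_repX, hp,
        Submodule.Quotient.mk_smul]

lemma toRep_eq_zero_of_mem_Mb (b : ObjR k G n χ) {m : Acar k G n} (hm : m ∈ Mb χ b.1) :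
    toRep χ b m = 0 := by
  induction hm using Submodule.span_induction with
  | mem _ hx =>
    obtain ⟨⟨i, ρ⟩, rfl⟩ := hx
    rw [toRep_gen, sub_self, Finsupp.single_zero]
  | zero => exact map_zero _
  | add x y _ _ hx hy => rw [map_add, hx, hy, add_zero]
  | smul p x _ hx => rw [toRep_smul, hx, map_zero]

lemma mem_Mb_iff (b : ObjR k G n χ) (m : Acar k G n) : m ∈ Mb χ b.1 ↔ toRep χ b m = 0 := by
  refine ⟨toRep_eq_zero_of_mem_Mb χ b, fun h => ?_⟩
  rw [← Submodule.Quotient.mk_eq_zero, ← mk_ofRep_toRep, h, map_zero,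
    Submodule.Quotient.mk_zero]

lemma mk_eq_mk_iff (b : ObjR k G n χ) (m m' : Acar k G n) :
    (Submodule.Quotient.mk m : Acar k G n ⧸ Mb χ b.1) = Submodule.Quotient.mk m' ↔
      toRep χ b m = toRep χ b m' := by
  rw [Submodule.Quotient.eq, mem_Mb_iff, map_sub, sub_eq_zero]

lemma single_one_notMem_Mb (b : ObjR k G n χ) (ρ : G →* kˣ) :
    Finsupp.single ρ (1 : MvPolynomial (Fin n) k) ∉ Mb χ b.1 := by
  simp [mem_Mb_iff, toRep_single]

variable [DecidableEq (G →* kˣ)]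

lemma toRep_eMul (b : ObjR k G n χ) (σ : G →* kˣ) (m : Acar k G n) :
    toRep χ b (eMul χ σ m) = Finsupp.single σ (toRep χ b m σ) := by
  induction m using Finsupp.induction_linear with
  | zero => simp [eMul_zero]
  | add f g hf hg => rw [eMul_add, map_add, hf, hg, map_add, Finsupp.add_apply, Finsupp.single_add]
  | single ρ p =>
    induction p using MvPolynomial.induction_on' with
    | monomial u c =>
      obtain ⟨c', hc'⟩ := rep_monomial_single χ b u c ρ 1
      rw [eMul_single_monomial, toRep_single, hc']
      split_ifs with h
      · rw [toRep_single, hc', h, Finsupp.single_eq_same]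
      · rw [map_zero, Finsupp.single_eq_of_ne (Ne.symm h), Finsupp.single_zero]
    | add p q hp hq => rw [Finsupp.single_add, eMul_add, map_add, hp, hq, map_add,
        Finsupp.add_apply, Finsupp.single_add]

lemma isLeftIdeal_Mb (b : ObjR k G n χ) : IsLeftIdeal χ (Mb χ b.1) := by
  intro σ m hm
  rw [mem_Mb_iff] at hm ⊢
  rw [toRep_eMul, hm, Finsupp.coe_zero, Pi.zero_apply, Finsupp.single_zero]

lemma mk_eMul (b : ObjR k G n χ) (σ : G →* kˣ) (m : Acar k G n) :
    (Submodule.Quotient.mk (eMul χ σ m) : Acar k G n ⧸ Mb χ b.1) =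
      Submodule.Quotient.mk (Finsupp.single σ (C (toRep χ b m σ))) := by
  rw [mk_eq_mk_iff, toRep_eMul, toRep_single_C]

end Quotient

section Objects

variable {k : Type*} [Field k] {G : Type*} [CommGroup G] {n : ℕ} (χ : Fin n → G →* kˣ)

lemma single_monomial_mem_homPiece {u : Fin n →₀ ℕ} {σ ρ : G →* kˣ}
    (h : degMon χ u * σ = ρ) :
    Finsupp.single σ (monomial u (1 : k)) ∈ homPiece k χ ρ :=
  Submodule.subset_span ⟨u, σ, h, rfl⟩

lemma single_one_mem_homPiece (ρ : G →* kˣ) :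
    Finsupp.single ρ (1 : MvPolynomial (Fin n) k) ∈ homPiece k χ ρ := by
  simpa using single_monomial_mem_homPiece (k := k) χ (u := 0) (one_mul ρ)

lemma Mb_injective : Function.Injective fun b : ObjR k G n χ => Mb χ b.1 := by
  intro b b' (h : Mb χ b.1 = Mb χ b'.1)
  apply Subtype.ext
  funext i ρ
  have := (mem_Mb_iff χ b' _).1 (h ▸ gen_mem_Mb χ b.1 i ρ)
  rw [toRep_gen, Finsupp.single_eq_zero, sub_eq_zero] at this
  exact this.symm

lemma rel_of_gen_mem {M : Submodule (MvPolynomial (Fin n) k) (Acar k G n)}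
    (hM : ∀ ρ : G →* kˣ, Finsupp.single ρ 1 ∉ M)
    {b : Fin n → (G →* kˣ) → k} (hgen : ∀ i ρ, gen χ b i ρ ∈ M) (i j : Fin n) (ρ : G →* kˣ) :
    b j (ρ * χ i) * b i ρ = b i (ρ * χ j) * b j ρ := by
  apply eq_of_mk_single_C_eq (hM (ρ * χ i * χ j))
  calc _ = (X j : MvPolynomial (Fin n) k) • (X i : MvPolynomial (Fin n) k) •
        (Submodule.Quotient.mk (Finsupp.single ρ (C 1)) : Acar k G n ⧸ M) := by
        rw [X_smul_mk_single_C χ (hgen i ρ), X_smul_mk_single_C χ (hgen j _), mul_one]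
    _ = (X i : MvPolynomial (Fin n) k) • (X j : MvPolynomial (Fin n) k) •
        (Submodule.Quotient.mk (Finsupp.single ρ (C 1)) : Acar k G n ⧸ M) := smul_comm _ _ _
    _ = _ := by
        rw [X_smul_mk_single_C χ (hgen j ρ), X_smul_mk_single_C χ (hgen i _), mul_one,
          mul_right_comm ρ (χ j) (χ i)]

variable [DecidableEq (G →* kˣ)]

lemma map_homPiece_mkQ_Mb (b : ObjR k G n χ) (ρ : G →* kˣ) :
    (homPiece k χ ρ).map ((Mb χ b.1).mkQ.restrictScalars k) =
      k ∙ Submodule.Quotient.mk (Finsupp.single ρ 1) := by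
  refine le_antisymm ?_ (Submodule.span_singleton_le_iff_mem _ _ |>.2
    ⟨_, single_one_mem_homPiece χ ρ, rfl⟩)
  rw [homPiece, Submodule.map_span, Submodule.span_le]
  rintro _ ⟨_, ⟨u, σ, hdeg, rfl⟩, rfl⟩
  have hfix : eMul χ ρ (Finsupp.single σ (monomial u 1)) = Finsupp.single σ (monomial u 1) := by
    rw [eMul_single_monomial, if_pos hdeg]
  rw [SetLike.mem_coe, LinearMap.restrictScalars_apply, Submodule.mkQ_apply, ← hfix, mk_eMul,
    single_C_eq_smul, Submodule.Quotient.mk_smul]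
  exact Submodule.smul_mem _ _ (Submodule.mem_span_singleton_self _)

lemma isObjC_Mb (b : ObjR k G n χ) : IsObjC χ (Mb χ b.1) := by
  refine ⟨isLeftIdeal_Mb χ b, single_one_notMem_Mb χ b, fun ρ => ?_⟩
  rw [map_homPiece_mkQ_Mb]
  refine finrank_span_singleton ?_
  rw [Ne, Submodule.Quotient.mk_eq_zero]
  exact single_one_notMem_Mb χ b ρ

variable {M : Submodule (MvPolynomial (Fin n) k) (Acar k G n)}

lemma exists_gen_mem (hM : IsObjC χ M) (i : Fin n) (ρ : G →* kˣ) :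
    ∃ c : k, Finsupp.single ρ (X i) - Finsupp.single (ρ * χ i) (C c) ∈ M := by
  set W := (homPiece k χ (ρ * χ i)).map (M.mkQ.restrictScalars k)
  have he : Submodule.Quotient.mk (Finsupp.single (ρ * χ i) (1 : MvPolynomial (Fin n) k)) ∈ W :=
    ⟨_, single_one_mem_homPiece χ _, rfl⟩
  have hx : Submodule.Quotient.mk (Finsupp.single ρ (X i : MvPolynomial (Fin n) k)) ∈ W :=
    ⟨_, single_monomial_mem_homPiece χ (u := Finsupp.single i 1)
      (by rw [degMon_single, pow_one (χ i), mul_comm (χ i) ρ]), rfl⟩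
  have hne : (⟨_, he⟩ : W) ≠ 0 := by
    simpa [Subtype.ext_iff, Submodule.Quotient.mk_eq_zero] using hM.2.1 (ρ * χ i)
  obtain ⟨c, hc⟩ := (finrank_eq_one_iff_of_nonzero' _ hne).1 (hM.2.2 _) ⟨_, hx⟩
  refine ⟨c, ?_⟩
  rw [← Submodule.Quotient.eq, single_C_eq_smul, Submodule.Quotient.mk_smul]
  exact congrArg Subtype.val hc.symm

lemma Mb_eq_of_gen_mem (hideal : IsLeftIdeal χ M) (hM : ∀ ρ : G →* kˣ, Finsupp.single ρ 1 ∉ M)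
    (b : ObjR k G n χ) (hgen : ∀ i ρ, gen χ b.1 i ρ ∈ M) : Mb χ b.1 = M := by
  have hle : Mb χ b.1 ≤ M :=
    Submodule.span_le.2 (by rintro _ ⟨⟨i, ρ⟩, rfl⟩; exact hgen i ρ)
  refine le_antisymm hle fun m hm => ?_
  rw [mem_Mb_iff]
  ext σ
  have hdiff := hle ((Submodule.Quotient.eq _).1 (mk_eMul χ b σ m))
  have hmem : Finsupp.single σ (C (toRep χ b m σ)) ∈ M := by
    simpa using M.sub_mem (hideal σ m hm) hdiff
  exact eq_zero_of_single_C_mem (hM σ) hmem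

lemma exists_Mb_eq (hM : IsObjC χ M) : ∃ b : ObjR k G n χ, Mb χ b.1 = M := by
  choose b hb using exists_gen_mem χ hM
  exact ⟨⟨b, rel_of_gen_mem χ hM.2.1 hb⟩, Mb_eq_of_gen_mem χ hM.1 hM.2.1 _ hb⟩

end Objects

section Morphisms

variable {k : Type*} [Field k] {G : Type*} [CommGroup G] {n : ℕ} (χ : Fin n → G →* kˣ)

noncomputable def diagMul (h : (G →* kˣ) → k) :
    Acar k G n →ₗ[MvPolynomial (Fin n) k] Acar k G n :=
  Finsupp.lsum (MvPolynomial (Fin n) k) fun ρ =>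
    (C (h ρ) : MvPolynomial (Fin n) k) • Finsupp.lsingle ρ

lemma diagMul_single (h : (G →* kˣ) → k) (ρ : G →* kˣ) (p : MvPolynomial (Fin n) k) :
    diagMul h (Finsupp.single ρ p) = Finsupp.single ρ (C (h ρ) * p) := by
  simp [diagMul, Finsupp.smul_single]

lemma diagMul_apply (h : (G →* kˣ) → k) (m : Acar k G n) (ρ : G →* kˣ) :
    diagMul h m ρ = C (h ρ) * m ρ := by
  induction m using Finsupp.induction_linear with
  | zero => simp
  | add f g hf hg => rw [map_add, Finsupp.add_apply, hf, hg, Finsupp.add_apply, mul_add]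
  | single τ p =>
    rw [diagMul_single]
    rcases eq_or_ne τ ρ with rfl | hne
    · rw [Finsupp.single_eq_same, Finsupp.single_eq_same]
    · rw [Finsupp.single_eq_of_ne hne.symm, Finsupp.single_eq_of_ne hne.symm, mul_zero]

lemma diagMul_gen {b b' : ObjR k G n χ} (h : HomR χ b b') (i : Fin n) (ρ : G →* kˣ) :
    diagMul h.1 (gen χ b'.1 i ρ) = (C (h.1 ρ) : MvPolynomial (Fin n) k) • gen χ b.1 i ρ := by
  rw [gen, gen, map_sub, diagMul_single, diagMul_single, smul_sub, Finsupp.smul_single,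
    Finsupp.smul_single, smul_eq_mul, smul_eq_mul, ← map_mul, ← map_mul, ← h.2 i ρ,
    mul_comm (b.1 i ρ)]

lemma Mb_le_comap_diagMul {b b' : ObjR k G n χ} (h : HomR χ b b') :
    Mb χ b'.1 ≤ (Mb χ b.1).comap (diagMul h.1) :=
  Submodule.span_le.2 <| by
    rintro _ ⟨⟨i, ρ⟩, rfl⟩
    rw [SetLike.mem_coe, Submodule.mem_comap, diagMul_gen]
    exact Submodule.smul_mem _ _ (gen_mem_Mb χ b.1 i ρ)

variable [DecidableEq (G →* kˣ)]

lemma HomC.apply_single {M M' : Submodule (MvPolynomial (Fin n) k) (Acar k G n)}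
    (F : HomC χ M M') (ρ : G →* kˣ) (p : MvPolynomial (Fin n) k) :
    F.1 (Finsupp.single ρ p) = p • F.1 (Finsupp.single ρ 1) := by
  rw [← map_smul, Finsupp.smul_single_one]

lemma eMul_diagMul (h : (G →* kˣ) → k) (σ : G →* kˣ) (m : Acar k G n) :
    eMul χ σ (diagMul h m) = diagMul h (eMul χ σ m) := by
  ext ρ : 1
  rw [eMul_apply, diagMul_apply, diagMul_apply, eMul_apply, homComp_C_mul]

/-- The functor `Ψ` on morphisms. -/
noncomputable def HomR.toHomC {b b' : ObjR k G n χ} (h : HomR χ b b') :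
    HomC χ (Mb χ b'.1) (Mb χ b.1) :=
  ⟨(Mb χ b.1).mkQ ∘ₗ diagMul h.1,
    fun _ hm => (Submodule.Quotient.mk_eq_zero _).2 (Mb_le_comap_diagMul χ h hm),
    fun σ m m' hm' => by
      simp only [LinearMap.comp_apply, Submodule.mkQ_apply] at hm' ⊢
      rw [← eMul_diagMul, mk_eMul, mk_eMul, (mk_eq_mk_iff χ b m' _).1 hm']⟩

lemma HomR.toHomC_single_one {b b' : ObjR k G n χ} (h : HomR χ b b') (ρ : G →* kˣ) :
    (h.toHomC χ).1 (Finsupp.single ρ 1) =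
      Submodule.Quotient.mk (Finsupp.single ρ (C (h.1 ρ))) := by
  simp [HomR.toHomC, diagMul_single]

lemma HomR.toHomC_injective (b b' : ObjR k G n χ) :
    Function.Injective (HomR.toHomC χ (b := b) (b' := b')) := by
  intro h h' hh
  apply Subtype.ext
  funext ρ
  have := congrArg (fun F : HomC χ _ _ => F.1 (Finsupp.single ρ 1)) hh
  simp only [HomR.toHomC_single_one] at this
  exact eq_of_mk_single_C_eq (single_one_notMem_Mb χ b ρ) this

lemma HomC.exists_apply_single_one {M : Submodule (MvPolynomial (Fin n) k) (Acar k G n)}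
    {b : ObjR k G n χ} (F : HomC χ M (Mb χ b.1)) (ρ : G →* kˣ) :
    ∃ c : k, F.1 (Finsupp.single ρ 1) = Submodule.Quotient.mk (Finsupp.single ρ (C c)) := by
  obtain ⟨m, hm⟩ := Submodule.Quotient.mk_surjective _ (F.1 (Finsupp.single ρ 1))
  have hfix : eMul χ ρ (Finsupp.single ρ 1) = Finsupp.single ρ 1 := by
    have := eMul_single_monomial (k := k) χ ρ ρ 0 1
    rwa [if_pos (show degMon χ 0 * ρ = ρ from one_mul ρ), monomial_zero', C_1] at this
  exact ⟨toRep χ b m ρ, by rw [← hfix, ← F.2.2 ρ _ m hm, mk_eMul]⟩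

lemma HomR.toHomC_surjective (b b' : ObjR k G n χ) :
    Function.Surjective (HomR.toHomC χ (b := b) (b' := b')) := by
  intro F
  choose h hh using F.exists_apply_single_one χ
  have hF : ∀ ρ p, F.1 (Finsupp.single ρ p) =
      Submodule.Quotient.mk (Finsupp.single ρ (p * C (h ρ))) := fun ρ p => by
    rw [HomC.apply_single, hh, ← Submodule.Quotient.mk_smul, Finsupp.smul_single, smul_eq_mul]
  have hmor : ∀ i ρ, b.1 i ρ * h ρ = h (ρ * χ i) * b'.1 i ρ := fun i ρ => by
    apply eq_of_mk_single_C_eq (single_one_notMem_Mb χ b (ρ * χ i))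
    have := F.2.1 _ (gen_mem_Mb χ b'.1 i ρ)
    rw [gen, map_sub, sub_eq_zero, HomC.apply_single, hh,
      X_smul_mk_single_C χ (gen_mem_Mb χ b.1 i ρ), hF, ← map_mul] at this
    rw [this, mul_comm]
  refine ⟨⟨h, hmor⟩, Subtype.ext (Finsupp.lhom_ext fun ρ p => ?_)⟩
  show Submodule.Quotient.mk (diagMul h (Finsupp.single ρ p)) = F.1 (Finsupp.single ρ p)
  rw [diagMul_single, hF, mul_comm]

end Morphisms

section

variable {k : Type*} [Field k] {G : Type*} [CommGroup G] {n : ℕ}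
variable [DecidableEq (G →* kˣ)]

/-- There is a contravariant functor `Ψ : 𝓡 → 𝓒`, `b ↦ A/M_b`, sending a
morphism `h : b → b'` to the map `A/M_{b'} → A/M_b`, `e_ρ ↦ h_ρ e_ρ`, and `Ψ`
is an isomorphism of categories: it is bijective on objects and bijective on
Hom-sets. -/
theorem functor_Psi_isomorphism_of_categories (χ : Fin n → G →* kˣ) :
    (∀ b : ObjR k G n χ, IsObjC χ (Mb χ b.1)) ∧
    (Function.Injective fun b : ObjR k G n χ => Mb χ b.1) ∧
    (∀ M : Submodule (MvPolynomial (Fin n) k) (Acar k G n),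
      IsObjC χ M → ∃ b : ObjR k G n χ, Mb χ b.1 = M) ∧
    (∀ b b' : ObjR k G n χ,
      ∃ Φ : HomR χ b b' ≃ HomC χ (Mb χ b'.1) (Mb χ b.1),
        ∀ (h : HomR χ b b') (ρ : G →* kˣ),
          (Φ h).1 (Finsupp.single ρ (1 : MvPolynomial (Fin n) k)) =
            Submodule.Quotient.mk (Finsupp.single ρ (C (h.1 ρ)))) :=
  ⟨isObjC_Mb χ, Mb_injective χ, fun _ hM => exists_Mb_eq χ hM, fun b b' =>
    ⟨Equiv.ofBijective _ ⟨HomR.toHomC_injective χ b b', HomR.toHomC_surjective χ b b'⟩,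
      HomR.toHomC_single_one χ⟩⟩

end
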